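/- arXiv:2309.16144 — 4 statements merged into one kernel-verified Lean document; each statement's English description precedes it below -/
import Mathlib

section
/- Let A ∈ ℝ^{n×n}, E ∈ ℝ^{n×n_ω}, S ∈ ℝ^{n_ω×n_ω}, C ∈ ℝ^{p×n}, G ∈ ℝ^{p×n_ω}, B ∈ ℝ^{n×m}, Γ ∈ ℝ^{m×n_ω}, and Π ∈ ℝ^{n×n_ω} satisfy the regulator equations ΠS = AΠ + BΓ + E and CΠ + G = 0. If the pair ((C, -G), [[A, -E],[0, S]]) is detectable, then the pair ((C, 0), [[A, BΓ],[0, S]]) is detectable. -/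
open Matrix

/-- Discrete-time detectability of a real pair (C, A): for every complex `lam` with
`‖lam‖ ≥ 1`, the matrix `[[lam I - A],[C]]` has full column rank. -/
def Detectable {p n : Type*} [Fintype p] [Fintype n] [DecidableEq n]
    (C : Matrix p n ℝ) (A : Matrix n n ℝ) : Prop :=
  ∀ lam : ℂ, 1 ≤ ‖lam‖ →
    (Matrix.fromRows (lam • (1 : Matrix n n ℂ) - A.map Complex.ofReal)
      (C.map Complex.ofReal)).rank = Fintype.card n

private lemma mapc_mul {a b c : Type*} [Fintype b] (M : Matrix a b ℝ) (N : Matrix b c ℝ) :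
    (M * N).map Complex.ofReal = M.map Complex.ofReal * N.map Complex.ofReal :=
  Matrix.map_mul (f := Complex.ofRealHom)

private lemma mapc_add {a b : Type*} (M N : Matrix a b ℝ) :
    (M + N).map Complex.ofReal = M.map Complex.ofReal + N.map Complex.ofReal := by
  ext i j; simp

private lemma mapc_neg {a b : Type*} (M : Matrix a b ℝ) :
    (-M).map Complex.ofReal = -(M.map Complex.ofReal) := by
  ext i j; simp

private lemma mapc_zero {a b : Type*} :
    (0 : Matrix a b ℝ).map Complex.ofReal = 0 := by
  ext i j; simp

theorem stmt_4 {n nω p m : ℕ}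
    (A : Matrix (Fin n) (Fin n) ℝ) (E : Matrix (Fin n) (Fin nω) ℝ)
    (S : Matrix (Fin nω) (Fin nω) ℝ) (C : Matrix (Fin p) (Fin n) ℝ)
    (G : Matrix (Fin p) (Fin nω) ℝ) (B : Matrix (Fin n) (Fin m) ℝ)
    (Ga : Matrix (Fin m) (Fin nω) ℝ) (Pmat : Matrix (Fin n) (Fin nω) ℝ)
    (hreg1 : Pmat * S = A * Pmat + B * Ga + E)
    (hreg2 : C * Pmat + G = 0)
    (hdet : Detectable (Matrix.fromCols C (-G)) (Matrix.fromBlocks A (-E) 0 S)) :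
    Detectable (Matrix.fromCols C 0) (Matrix.fromBlocks A (B * Ga) 0 S) := by
  intro lam hlam
  set A' := A.map Complex.ofReal with hA'
  set E' := E.map Complex.ofReal with hE'
  set S' := S.map Complex.ofReal with hS'
  set C' := C.map Complex.ofReal with hC'
  set G' := G.map Complex.ofReal with hG'
  set B' := B.map Complex.ofReal with hB'
  set Ga' := Ga.map Complex.ofReal with hGa'
  set P' := Pmat.map Complex.ofReal with hP'
  have hreg1' : P' * S' = A' * P' + B' * Ga' + E' := by
    have h := congrArg (fun M => M.map Complex.ofReal) hreg1
    simpa only [mapc_mul, mapc_add] using h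
  have hreg2' : C' * P' + G' = 0 := by
    have h := congrArg (fun M => M.map Complex.ofReal) hreg2
    simpa only [mapc_mul, mapc_add, mapc_zero] using h
  set φ : Matrix (Fin n ⊕ Fin nω) (Fin n ⊕ Fin nω) ℂ := fromBlocks 1 (-P') 0 1 with hφ
  set ψ : Matrix (Fin n ⊕ Fin nω) (Fin n ⊕ Fin nω) ℂ := fromBlocks 1 P' 0 1 with hψ
  have hψφ : ψ * φ = 1 := by
    simp [hφ, hψ, fromBlocks_multiply, ← fromBlocks_one]
  have hφψ : φ * ψ = 1 := by
    simp [hφ, hψ, fromBlocks_multiply, ← fromBlocks_one]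
  have hφu : IsUnit φ.det := Matrix.isUnit_det_of_right_inverse hφψ
  have hψu : IsUnit ψ.det := Matrix.isUnit_det_of_right_inverse hψφ
  set D : Matrix ((Fin n ⊕ Fin nω) ⊕ Fin p) ((Fin n ⊕ Fin nω) ⊕ Fin p) ℂ :=
    fromBlocks ψ 0 0 1 with hD
  have hDu : IsUnit D.det := by
    rw [hD, det_fromBlocks_zero₂₁]
    simpa using hψu
  have hmap1 : (Matrix.fromBlocks A (-E) 0 S).map Complex.ofReal =
      fromBlocks A' (-E') 0 S' := by
    rw [Matrix.fromBlocks_map, mapc_neg, mapc_zero]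
  have hmap2 : (Matrix.fromBlocks A (B * Ga) 0 S).map Complex.ofReal =
      fromBlocks A' (B' * Ga') 0 S' := by
    rw [Matrix.fromBlocks_map, mapc_mul, mapc_zero]
  have hmapC1 : (Matrix.fromCols C (-G)).map Complex.ofReal =
      fromCols C' (-G') := by
    ext i (j | j) <;> simp [Matrix.fromCols, hC', hG']
  have hmapC2 : (Matrix.fromCols C (0 : Matrix (Fin p) (Fin nω) ℝ)).map Complex.ofReal =
      fromCols C' (0 : Matrix (Fin p) (Fin nω) ℂ) := by
    ext i (j | j) <;> simp [Matrix.fromCols, hC']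
  set M1 := Matrix.fromRows (lam • (1 : Matrix (Fin n ⊕ Fin nω) (Fin n ⊕ Fin nω) ℂ)
      - fromBlocks A' (-E') 0 S') (fromCols C' (-G')) with hM1
  have hCP : C' * P' = -G' := eq_neg_of_add_eq_zero_left hreg2'
  have e1 : ψ * (lam • (1 : Matrix (Fin n ⊕ Fin nω) (Fin n ⊕ Fin nω) ℂ)
      - fromBlocks A' (-E') 0 S') * φ
      = lam • 1 - fromBlocks A' (B' * Ga') 0 S' := by
    rw [mul_sub, sub_mul]
    have h1 : ψ * (lam • (1 : Matrix (Fin n ⊕ Fin nω) (Fin n ⊕ Fin nω) ℂ)) * φ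
        = lam • 1 := by
      rw [mul_smul_comm, mul_one, smul_mul_assoc, hψφ]
    have h2 : ψ * fromBlocks A' (-E') 0 S' * φ = fromBlocks A' (B' * Ga') 0 S' := by
      rw [hψ, hφ, fromBlocks_multiply, fromBlocks_multiply]
      simp only [Matrix.one_mul, Matrix.mul_one, Matrix.zero_mul, Matrix.mul_zero,
        add_zero, zero_add, Matrix.mul_neg]
      rw [hreg1', Matrix.fromBlocks_inj]
      refine ⟨rfl, by abel, rfl, by abel⟩
    rw [h1, h2]
  have e2 : fromCols C' (-G') * φ = fromCols C' 0 := by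
    rw [hφ, fromCols_mul_fromBlocks]
    simp [Matrix.mul_neg, hCP]
  have key : D * M1 * φ = Matrix.fromRows (lam • (1 : Matrix (Fin n ⊕ Fin nω) (Fin n ⊕ Fin nω) ℂ)
      - (Matrix.fromBlocks A (B * Ga) 0 S).map Complex.ofReal)
      ((Matrix.fromCols C 0).map Complex.ofReal) := by
    rw [hmap2, hmapC2, hD, hM1, fromBlocks_mul_fromRows, fromRows_mul]
    simp only [Matrix.zero_mul, Matrix.one_mul, add_zero, zero_add]
    rw [e1, e2]
  rw [← key, rank_mul_eq_left_of_isUnit_det _ _ hφu, rank_mul_eq_right_of_isUnit_det _ _ hDu]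
  have h := hdet lam hlam
  rwa [hmap1, hmapC1] at h
end

section
/- Let A_{q} be Schur stable and suppose the pair ((C, -G), [[A, -E],[0, S]]) is detectable. Then the pair (Č, Ǎ) with Ǎ = [[A, BC_q, -E],[0, A_q, 0],[0, 0, S]] and Č = [C, 0, -G] is detectable. -/
open Matrix

lemma aux_rank_iff {m k : Type*} [Fintype m] [Fintype k] (M : Matrix m k ℂ) :
    M.rank = Fintype.card k ↔ ∀ v : k → ℂ, M *ᵥ v = 0 → v = 0 := by
  have h := LinearMap.finrank_range_add_finrank_ker M.mulVecLin
  rw [Module.finrank_fintype_fun_eq_card] at h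
  have hr : M.rank = Module.finrank ℂ (LinearMap.range M.mulVecLin) := rfl
  constructor
  · intro hrank v hv
    have hker : Module.finrank ℂ (LinearMap.ker M.mulVecLin) = 0 := by omega
    rw [Submodule.finrank_eq_zero] at hker
    have : v ∈ LinearMap.ker M.mulVecLin := by
      simp [LinearMap.mem_ker, Matrix.mulVecLin_apply, hv]
    rw [hker] at this
    simpa using this
  · intro hinj
    have hker : LinearMap.ker M.mulVecLin = ⊥ := by
      rw [Submodule.eq_bot_iff]
      intro v hv
      exact hinj v (by simpa [Matrix.mulVecLin_apply] using hv)
    rw [hker] at h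
    simp at h
    omega

lemma aux_map_fromColumns {m k l : Type*} (A : Matrix m k ℝ) (B : Matrix m l ℝ) :
    (Matrix.fromCols A B).map Complex.ofReal =
      Matrix.fromCols (A.map Complex.ofReal) (B.map Complex.ofReal) := by
  ext i (j | j) <;> rfl

theorem stmt_7 {n q nω p m : ℕ}
    (A : Matrix (Fin n) (Fin n) ℝ) (B : Matrix (Fin n) (Fin m) ℝ)
    (Cq : Matrix (Fin m) (Fin q) ℝ) (Aq : Matrix (Fin q) (Fin q) ℝ)
    (E : Matrix (Fin n) (Fin nω) ℝ) (S : Matrix (Fin nω) (Fin nω) ℝ)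
    (C : Matrix (Fin p) (Fin n) ℝ) (G : Matrix (Fin p) (Fin nω) ℝ)
    (hAq : ∀ mu ∈ spectrum ℂ (Aq.map Complex.ofReal), ‖mu‖ < 1)
    (hdet : Detectable (Matrix.fromCols C (-G)) (Matrix.fromBlocks A (-E) 0 S)) :
    Detectable
      (Matrix.fromCols C (Matrix.fromCols 0 (-G)))
      (Matrix.fromBlocks A (Matrix.fromCols (B * Cq) (-E)) 0
        (Matrix.fromBlocks Aq 0 0 S)) := by
  intro lam hlam
  rw [aux_rank_iff]
  have hsmall := hdet lam hlam
  rw [aux_rank_iff] at hsmall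
  -- notation
  set A' := A.map Complex.ofReal
  set Aq' := Aq.map Complex.ofReal
  set S' := S.map Complex.ofReal
  set E' := E.map Complex.ofReal
  set C' := C.map Complex.ofReal
  set G' := G.map Complex.ofReal
  set BCq' := (B * Cq).map Complex.ofReal
  -- lam is not in the spectrum of Aq'
  have hAqunit : IsUnit (lam • (1 : Matrix (Fin q) (Fin q) ℂ) - Aq') := by
    have hns : lam ∉ spectrum ℂ Aq' := fun hmem => absurd (hAq lam hmem) (not_lt.2 hlam)
    rw [spectrum.notMem_iff] at hns
    simpa [Matrix.algebraMap_eq_diagonal, Matrix.smul_one_eq_diagonal, Pi.algebraMap_def] using hns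
  intro v hv
  set x : Fin n → ℂ := fun i => v (Sum.inl i) with hx
  set z : Fin q → ℂ := fun i => v (Sum.inr (Sum.inl i)) with hzdef
  set w : Fin nω → ℂ := fun i => v (Sum.inr (Sum.inr i)) with hw
  have hvel : v = Sum.elim x (Sum.elim z w) := by
    funext i
    rcases i with i | i | i <;> rfl
  -- the two components of the fromRows product
  have hT : (lam • (1 : Matrix _ _ ℂ) -
      (Matrix.fromBlocks A (Matrix.fromCols (B * Cq) (-E)) 0
        (Matrix.fromBlocks Aq 0 0 S)).map Complex.ofReal) *ᵥ v = 0 := by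
    funext i
    exact congrFun hv (Sum.inl i)
  have hC : ((Matrix.fromCols C (Matrix.fromCols 0 (-G))).map Complex.ofReal) *ᵥ v = 0 := by
    funext i
    exact congrFun hv (Sum.inr i)
  rw [Matrix.fromBlocks_map, aux_map_fromColumns, Matrix.fromBlocks_map] at hT
  rw [aux_map_fromColumns, aux_map_fromColumns] at hC
  have hmapneg : (-E).map Complex.ofReal = -E' := by ext i j; simp [E', Matrix.map_apply]
  have hmapnegG : (-G).map Complex.ofReal = -G' := by ext i j; simp [G', Matrix.map_apply]
  have hmap0 : ((0 : Matrix (Fin q ⊕ Fin nω) (Fin n) ℝ)).map Complex.ofReal = 0 := by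
    ext i j; simp [Matrix.map_apply]
  have hmap0' : ((0 : Matrix (Fin q) (Fin nω) ℝ)).map Complex.ofReal = 0 := by
    ext i j; simp [Matrix.map_apply]
  have hmap0'' : ((0 : Matrix (Fin nω) (Fin q) ℝ)).map Complex.ofReal = 0 := by
    ext i j; simp [Matrix.map_apply]
  have hmap0c : ((0 : Matrix (Fin p) (Fin q) ℝ)).map Complex.ofReal = 0 := by
    ext i j; simp [Matrix.map_apply]
  rw [hmapneg, hmap0, hmap0', hmap0''] at hT
  rw [hmapnegG, hmap0c] at hC
  -- expand hT
  rw [sub_mulVec, hvel, Matrix.smul_mulVec, Matrix.one_mulVec,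
    Matrix.fromBlocks_mulVec] at hT
  simp only [Sum.elim_comp_inl, Sum.elim_comp_inr, Matrix.fromCols_mulVec_sumElim,
    Matrix.fromBlocks_mulVec, Matrix.zero_mulVec, zero_add, add_zero,
    Matrix.neg_mulVec] at hT
  -- extract the three block equations
  have hTq : lam • z - Aq' *ᵥ z = 0 := by
    funext i
    have := congrFun hT (Sum.inr (Sum.inl i))
    simpa using this
  have hz : z = 0 := by
    have h1 : (lam • (1 : Matrix (Fin q) (Fin q) ℂ) - Aq') *ᵥ z = 0 := by
      rw [sub_mulVec, Matrix.smul_mulVec, Matrix.one_mulVec]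
      exact hTq
    haveI := hAqunit.invertible
    have := Matrix.mulVec_injective_of_invertible (lam • (1 : Matrix (Fin q) (Fin q) ℂ) - Aq')
    have h0 : (lam • (1 : Matrix (Fin q) (Fin q) ℂ) - Aq') *ᵥ (0 : Fin q → ℂ) = 0 := by
      simp
    exact this (h1.trans h0.symm)
  have hTn : lam • x - (A' *ᵥ x + (BCq' *ᵥ z + -(E' *ᵥ w))) = 0 := by
    funext i
    have := congrFun hT (Sum.inl i)
    simpa using this
  have hTw : lam • w - S' *ᵥ w = 0 := by
    funext i
    have := congrFun hT (Sum.inr (Sum.inr i))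
    simpa using this
  -- expand hC
  rw [hvel, Matrix.fromCols_mulVec_sumElim, Matrix.fromCols_mulVec_sumElim] at hC
  -- build kernel vector for the small pair
  have hsmallker : Sum.elim x w = 0 := by
    apply hsmall
    have hmap0d : ((0 : Matrix (Fin nω) (Fin n) ℝ)).map Complex.ofReal = 0 := by
      ext i j; simp [Matrix.map_apply]
    rw [hz] at hTn
    simp only [Matrix.mulVec_zero, zero_add, add_zero] at hTn
    simp only [Matrix.zero_mulVec, zero_add, Matrix.neg_mulVec, Matrix.mulVec_zero] at hC
    rw [Matrix.fromBlocks_map, hmapneg, hmap0d, aux_map_fromColumns, hmapnegG,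
      Matrix.fromRows_mulVec, sub_mulVec, Matrix.smul_mulVec, Matrix.one_mulVec,
      Matrix.fromBlocks_mulVec, Matrix.fromCols_mulVec_sumElim]
    simp only [Sum.elim_comp_inl, Sum.elim_comp_inr, Matrix.zero_mulVec, zero_add,
      Matrix.neg_mulVec]
    funext i
    rcases i with (i | i) | i
    · simpa using congrFun hTn i
    · simpa using congrFun hTw i
    · simpa using congrFun hC i
  have hx0 : x = 0 := by funext i; exact congrFun hsmallker (Sum.inl i)
  have hw0 : w = 0 := by funext i; exact congrFun hsmallker (Sum.inr i)
  rw [hvel, hx0, hz, hw0]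
  funext i
  rcases i with i | i | i <;> rfl
end

section
/- If a directed weighted graph on N nodes contains a directed spanning tree, then its Laplacian matrix L has exactly one zero eigenvalue (algebraic multiplicity one), and all other eigenvalues have strictly positive real part. -/
open Matrix

open Finset in
lemma lemB {N : ℕ} (hN : 0 < N) (a : Fin N → Fin N → ℝ) (ha : ∀ i j, 0 ≤ a i j)
    (u : Fin N → ℝ) (c : ℝ)
    (h : ∀ i, (∑ k, a i k) * u i - ∑ k, a i k * u k = c) : c = 0 := by
  have hne : (Finset.univ : Finset (Fin N)).Nonempty := ⟨⟨0, hN⟩, Finset.mem_univ _⟩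
  have key : ∀ i, (∑ k, a i k) * u i - ∑ k, a i k * u k = ∑ k, a i k * (u i - u k) := by
    intro i
    rw [Finset.sum_mul, ← Finset.sum_sub_distrib]
    exact Finset.sum_congr rfl fun k _ => by ring
  obtain ⟨i, -, hi⟩ := Finset.exists_max_image Finset.univ u hne
  obtain ⟨j, -, hj⟩ := Finset.exists_min_image Finset.univ u hne
  have h1 : 0 ≤ c := by
    rw [← h i, key i]
    exact Finset.sum_nonneg fun k _ => mul_nonneg (ha i k)
      (sub_nonneg.mpr (hi k (Finset.mem_univ k)))
  have h2 : c ≤ 0 := by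
    rw [← h j, key j]
    exact Finset.sum_nonpos fun k _ => mul_nonpos_of_nonneg_of_nonpos (ha j k)
      (sub_nonpos.mpr (hj k (Finset.mem_univ k)))
  linarith

-- Kernel vectors are constant, given a spanning tree.

open Finset in
lemma lemA {N : ℕ} (a : Fin N → Fin N → ℝ) (ha : ∀ i j, 0 ≤ a i j)
    (r : Fin N) (hr : ∀ i, Relation.ReflTransGen (fun x y : Fin N => 0 < a y x) r i)
    (u v : Fin N → ℝ)
    (hu : ∀ i, (∑ k, a i k) * u i = ∑ k, a i k * u k)
    (hv : ∀ i, (∑ k, a i k) * v i = ∑ k, a i k * v k) :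
    ∀ i, u i = u r ∧ v i = v r := by
  set p : Fin N → ℝ := fun i => u i - u r with hp
  set q : Fin N → ℝ := fun i => v i - v r with hq
  have hpe : ∀ i, (∑ k, a i k) * p i = ∑ k, a i k * p k := by
    intro i
    simp only [hp, mul_sub, Finset.sum_sub_distrib, ← Finset.sum_mul]
    rw [hu i]
  have hqe : ∀ i, (∑ k, a i k) * q i = ∑ k, a i k * q k := by
    intro i
    simp only [hq, mul_sub, Finset.sum_sub_distrib, ← Finset.sum_mul]
    rw [hv i]
  obtain ⟨m, -, hm⟩ := Finset.exists_max_image Finset.univ (fun i => p i ^ 2 + q i ^ 2)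
    ⟨r, Finset.mem_univ r⟩
  simp only [Finset.mem_univ, forall_true_left] at hm
  -- equality propagates backwards along edges from max-norm nodes
  have step : ∀ i, p m ^ 2 + q m ^ 2 ≤ p i ^ 2 + q i ^ 2 →
      ∀ j, 0 < a i j → p j = p i ∧ q j = q i := by
    intro i hmax j haij
    have e1 : ∑ k, a i k * (p i - p k) = 0 := by
      simp only [mul_sub, Finset.sum_sub_distrib, ← Finset.sum_mul]
      rw [hpe i]; ring
    have e2 : ∑ k, a i k * (q i - q k) = 0 := by
      simp only [mul_sub, Finset.sum_sub_distrib, ← Finset.sum_mul]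
      rw [hqe i]; ring
    have hsum : ∑ k, a i k * ((p i - p k) * p i + (q i - q k) * q i) = 0 := by
      calc ∑ k, a i k * ((p i - p k) * p i + (q i - q k) * q i)
          = (∑ k, a i k * (p i - p k)) * p i + (∑ k, a i k * (q i - q k)) * q i := by
            rw [Finset.sum_mul, Finset.sum_mul, ← Finset.sum_add_distrib]
            exact Finset.sum_congr rfl fun k _ => by ring
        _ = 0 := by rw [e1, e2]; ring
    have hnn : ∀ k ∈ Finset.univ, 0 ≤ a i k * ((p i - p k) * p i + (q i - q k) * q i) := by
      intro k _
      refine mul_nonneg (ha i k) ?_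
      have h1 := hm k
      nlinarith [sq_nonneg (p i - p k), sq_nonneg (q i - q k)]
    have hz := (Finset.sum_eq_zero_iff_of_nonneg hnn).mp hsum j (Finset.mem_univ j)
    have hz' : (p i - p j) * p i + (q i - q j) * q i = 0 := by
      rcases mul_eq_zero.mp hz with h | h
      · exact absurd h (ne_of_gt haij)
      · exact h
    have hj2 := hm j
    have hle : (p i - p j) ^ 2 + (q i - q j) ^ 2 ≤ 0 := by nlinarith
    constructor <;> nlinarith [sq_nonneg (p i - p j), sq_nonneg (q i - q j)]
  have hprop : ∀ i, Relation.ReflTransGen (fun x y : Fin N => 0 < a y x) i m →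
      p i = p m ∧ q i = q m := by
    intro i hpath
    induction hpath using Relation.ReflTransGen.head_induction_on with
    | refl => exact ⟨rfl, rfl⟩
    | head h' htail ih =>
      rename_i b c
      obtain ⟨hp1, hq1⟩ := ih
      have hmax : p m ^ 2 + q m ^ 2 ≤ p c ^ 2 + q c ^ 2 := by rw [hp1, hq1]
      obtain ⟨h1, h2⟩ := step c hmax b h'
      exact ⟨h1.trans hp1, h2.trans hq1⟩
  obtain ⟨hpr, hqr⟩ := hprop r (hr m)
  have hm0 : p m ^ 2 + q m ^ 2 = 0 := by
    have : p r = 0 := by simp [hp]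
    have : q r = 0 := by simp [hq]
    nlinarith [sq_nonneg (p m), sq_nonneg (q m), hpr, hqr]
  intro i
  have hle := hm i
  have hpi : p i = 0 := by nlinarith [sq_nonneg (p i), sq_nonneg (q i)]
  have hqi : q i = 0 := by nlinarith [sq_nonneg (p i), sq_nonneg (q i)]
  simp only [hp, hq] at hpi hqi
  constructor <;> linarith

open Finset in
theorem stmt_9 {N : ℕ} (hN : 0 < N)
    (a : Fin N → Fin N → ℝ)
    (ha : ∀ i j, 0 ≤ a i j) (hdiag : ∀ i, a i i = 0)
    (L : Matrix (Fin N) (Fin N) ℝ)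
    (hL : ∀ i j, L i j = if i = j then ∑ k, a i k else -(a i j))
    -- the graph (edge j → i iff a i j > 0) contains a directed spanning tree rooted at r
    (htree : ∃ r : Fin N, ∀ i : Fin N,
      Relation.ReflTransGen (fun x y : Fin N => 0 < a y x) r i) :
    (Matrix.charpoly (L.map Complex.ofReal)).rootMultiplicity 0 = 1 ∧
    (∀ mu ∈ spectrum ℂ (L.map Complex.ofReal), mu ≠ 0 → 0 < mu.re) := by
  obtain ⟨r, hr⟩ := htree
  set M := L.map Complex.ofReal with hMdef
  -- Row formula
  have hrowR : ∀ (x : Fin N → ℂ) (i : Fin N),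
      (M.mulVec x) i = ((∑ k, a i k : ℝ) : ℂ) * x i - ∑ k, ((a i k : ℝ) : ℂ) * x k := by
    intro x i
    have hM : ∀ k, M i k = ((L i k : ℝ) : ℂ) := fun k => rfl
    have h0 : (M.mulVec x) i = ∑ k, ((L i k : ℝ) : ℂ) * x k := by
      simp [Matrix.mulVec, dotProduct, hM]
    rw [h0]
    rw [← Finset.add_sum_erase _ (fun k => ((L i k : ℝ) : ℂ) * x k) (Finset.mem_univ i)]
    rw [← Finset.add_sum_erase _ (fun k => ((a i k : ℝ) : ℂ) * x k) (Finset.mem_univ i)]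
    rw [hL i i, if_pos rfl, hdiag i]
    push_cast
    rw [Finset.sum_congr rfl (fun k hk => by
      rw [hL i k, if_neg (Finset.ne_of_mem_erase hk).symm]
      push_cast; ring :
      ∀ k ∈ Finset.univ.erase i, ((L i k : ℝ) : ℂ) * x k = -(((a i k : ℝ) : ℂ) * x k))]
    rw [Finset.sum_neg_distrib]
    ring
  -- real and imaginary component row formulas
  have hre : ∀ (x : Fin N → ℂ) (i : Fin N),
      ((M.mulVec x) i).re = (∑ k, a i k) * (x i).re - ∑ k, a i k * (x k).re := by
    intro x i
    rw [hrowR]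
    simp [Complex.sub_re, Complex.re_sum, Complex.mul_re]
  have him : ∀ (x : Fin N → ℂ) (i : Fin N),
      ((M.mulVec x) i).im = (∑ k, a i k) * (x i).im - ∑ k, a i k * (x k).im := by
    intro x i
    rw [hrowR]
    simp [Complex.sub_im, Complex.im_sum, Complex.mul_im]
  -- kernel vectors are constant
  have hker : ∀ x : Fin N → ℂ, M.mulVec x = 0 → ∀ i, x i = x r := by
    intro x hx i
    have hu : ∀ i, (∑ k, a i k) * (x i).re = ∑ k, a i k * (x k).re := by
      intro i
      have h1 := hre x i
      rw [hx] at h1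
      simp at h1
      linarith
    have hv : ∀ i, (∑ k, a i k) * (x i).im = ∑ k, a i k * (x k).im := by
      intro i
      have h1 := him x i
      rw [hx] at h1
      simp at h1
      linarith
    obtain ⟨h1, h2⟩ := lemA a ha r hr (fun i => (x i).re) (fun i => (x i).im) hu hv i
    exact Complex.ext h1 h2
  -- constants in the range must be zero
  have hconst : ∀ (x : Fin N → ℂ) (c : ℂ), (∀ i, M.mulVec x i = c) → c = 0 := by
    intro x c hc
    have hcre : c.re = 0 := by
      refine lemB hN a ha (fun i => (x i).re) c.re fun i => ?_
      rw [← hre x i, hc i]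
    have hcim : c.im = 0 := by
      refine lemB hN a ha (fun i => (x i).im) c.im fun i => ?_
      rw [← him x i, hc i]
    exact Complex.ext hcre hcim
  -- the all-ones vector is in the kernel
  have hone : M.mulVec (fun _ => (1 : ℂ)) = 0 := by
    funext i
    rw [Pi.zero_apply, hrowR]
    simp [← Complex.ofReal_sum]
  -- kernel is spanned by ones
  have hkerspan : LinearMap.ker (Matrix.toLin' M)
      = Submodule.span ℂ {(fun _ => (1 : ℂ) : Fin N → ℂ)} := by
    apply le_antisymm
    · intro x hx
      rw [LinearMap.mem_ker, Matrix.toLin'_apply] at hx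
      rw [Submodule.mem_span_singleton]
      refine ⟨x r, ?_⟩
      funext i
      simp [hker x hx i]
    · rw [Submodule.span_singleton_le_iff_mem, LinearMap.mem_ker, Matrix.toLin'_apply]
      exact hone
  have hone_ne : (fun _ => (1 : ℂ) : Fin N → ℂ) ≠ 0 := by
    intro h
    exact one_ne_zero (congrFun h ⟨0, hN⟩)
  have hfr : Module.finrank ℂ (LinearMap.ker (Matrix.toLin' M)) = 1 := by
    rw [hkerspan]
    exact finrank_span_singleton hone_ne
  -- squares: ker φ² = ker φ
  have hsq : ∀ x : Fin N → ℂ, M.mulVec (M.mulVec x) = 0 → M.mulVec x = 0 := by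
    intro x hx
    have hcc : ∀ i, M.mulVec x i = M.mulVec x r := fun i => hker _ hx i
    have hc0 := hconst x (M.mulVec x r) hcc
    funext i
    rw [Pi.zero_apply, hcc i, hc0]
  have hkerpow : ∀ n : ℕ, 0 < n →
      LinearMap.ker ((Matrix.toLin' M) ^ n) = LinearMap.ker (Matrix.toLin' M) := by
    intro n hn
    induction n with
    | zero => exact absurd hn (lt_irrefl 0)
    | succ n ih =>
      rcases Nat.eq_zero_or_pos n with h0 | hpos
      · subst h0; rw [pow_one]
      · ext x
        simp only [LinearMap.mem_ker]
        constructor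
        · intro hx
          rw [pow_succ, Module.End.mul_apply] at hx
          have h1 : Matrix.toLin' M x ∈ LinearMap.ker ((Matrix.toLin' M) ^ n) := hx
          rw [ih hpos, LinearMap.mem_ker] at h1
          have h2 : M.mulVec (M.mulVec x) = 0 := by
            have := h1
            rwa [Matrix.toLin'_apply, Matrix.toLin'_apply] at this
          have := hsq x h2
          rw [Matrix.toLin'_apply]
          exact this
        · intro hx
          rw [pow_succ, Module.End.mul_apply, hx, map_zero]
  -- charpoly identification
  have hMeq : (LinearMap.toMatrix (Pi.basisFun ℂ (Fin N)) (Pi.basisFun ℂ (Fin N)))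
      (Matrix.toLin' M) = M := by
    rw [← Matrix.toLin_eq_toLin']
    exact LinearMap.toMatrix_toLin _ _ M
  have hcp : M.charpoly = LinearMap.charpoly (Matrix.toLin' M) := by
    conv_lhs => rw [← hMeq]
    exact LinearMap.charpoly_toMatrix _ _
  constructor
  · -- root multiplicity
    rw [Polynomial.rootMultiplicity_eq_natTrailingDegree', hcp,
      ← LinearMap.finrank_maxGenEigenspace_zero_eq,
      Module.End.maxGenEigenspace_eq_genEigenspace_finrank,
      Module.End.genEigenspace_nat]
    have hend : (Matrix.toLin' M - (0:ℂ) • (1 : Module.End ℂ (Fin N → ℂ))) = Matrix.toLin' M := by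
      rw [zero_smul, sub_zero]
    have hkN : LinearMap.ker ((Matrix.toLin' M - (0:ℂ) • 1) ^ (Module.finrank ℂ (Fin N → ℂ)))
        = LinearMap.ker (Matrix.toLin' M) := by
      rw [hend]
      exact hkerpow _ (by rw [Module.finrank_fin_fun ℂ]; exact hN)
    rw [hkN, hfr]
  · -- Gershgorin
    intro mu hmu hmune
    have heig : Module.End.HasEigenvalue (Matrix.toLin' M) mu := by
      rw [Module.End.hasEigenvalue_iff_mem_spectrum]
      rw [show (Matrix.toLin' M : Module.End ℂ (Fin N → ℂ)) = Matrix.toLinAlgEquiv' M from rfl,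
        AlgEquiv.spectrum_eq]
      exact hmu
    obtain ⟨k, hk⟩ := eigenvalue_mem_ball heig
    have hMkk : M k k = ((∑ j, a k j : ℝ) : ℂ) := by
      show ((L k k : ℝ) : ℂ) = _
      rw [hL k k, if_pos rfl]
    have hrad : (∑ j ∈ Finset.univ.erase k, ‖M k j‖) = ∑ j, a k j := by
      rw [Finset.sum_congr rfl (fun j hj => by
        show ‖((L k j : ℝ) : ℂ)‖ = a k j
        rw [hL k j, if_neg (Finset.ne_of_mem_erase hj).symm]
        rw [Complex.norm_real, Real.norm_eq_abs, abs_neg, abs_of_nonneg (ha k j)] :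
        ∀ j ∈ Finset.univ.erase k, ‖M k j‖ = a k j)]
      rw [Finset.sum_erase_eq_sub (Finset.mem_univ k), hdiag k, sub_zero]
    rw [hMkk, hrad, Metric.mem_closedBall, Complex.dist_eq] at hk
    set d : ℝ := ∑ j, a k j with hd
    have hd0 : 0 ≤ d := Finset.sum_nonneg fun j _ => ha k j
    have h2 : Complex.normSq (mu - (d : ℂ)) ≤ d ^ 2 := by
      rw [← Complex.sq_norm]
      exact pow_le_pow_left₀ (norm_nonneg _) hk 2
    have h3 : (mu.re - d) ^ 2 + mu.im ^ 2 ≤ d ^ 2 := by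
      rw [Complex.normSq_apply] at h2
      simp only [Complex.sub_re, Complex.sub_im, Complex.ofReal_re, Complex.ofReal_im,
        sub_zero] at h2
      nlinarith [h2]
    by_contra hcon
    push_neg at hcon
    have hre0 : mu.re = 0 := by nlinarith
    have him0 : mu.im = 0 := by nlinarith
    exact hmune (Complex.ext hre0 him0)
end

section
/- Let L̃ = L + diag(ι₁,...,ι_N) where L is a graph Laplacian and ι_i ∈ {0,1} with ι_i = 1 exactly for nodes in a root set 𝒞 such that every node is in a directed tree rooted in 𝒞. Let D̃ = I − (2I + D_in)^{-1} L̃ where D_in = diag(d̄_in(i)) with d̄_in(i) ≥ d_in(i). Then all entries of D̃ are nonnegative, every row sum of D̃ is at most 1, with strict inequality for rows i with ι_i = 1, and all eigenvalues of D̃ lie in the open unit disk. -/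
/-!
Rows of `D̃` are read off from `L̃`: the off-diagonal entries are `a i j / (2 + d̄ i)` and the row
sum is `1 - (a i i + ι i) / (2 + d̄ i)`, which gives nonnegativity and the row-sum bounds. For the
spectrum, take an eigenvector `v` for an eigenvalue `μ` with `|μ| ≥ 1` and a coordinate where `|v|`
is maximal. The triangle inequality forces equality throughout that row, so the row is stochastic
and `|v|` stays maximal at every coordinate the row charges. Following edges of the graph from the
maximising coordinate to a root, where the row sum is strictly below one, gives a contradiction.
-/

open Matrix Relation

theorem Relation.ReflTransGen.mono_of_ne {α : Type*} {r p : α → α → Prop}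
    (h : ∀ x y, x ≠ y → r x y → p x y) {a b : α} (hab : ReflTransGen r a b) :
    ReflTransGen p a b := by
  refine reflTransGen_closed (fun x y hxy => ?_) a b hab
  rcases eq_or_ne x y with rfl | hne
  · exact ReflTransGen.refl
  · exact ReflTransGen.single (h x y hne hxy)

namespace Matrix

variable {n : Type*}

theorem exists_mulVec_eq_smul_of_mem_spectrum [Fintype n] [DecidableEq n] {K : Type*} [Field K]
    {A : Matrix n n K} {μ : K} (h : μ ∈ spectrum K A) : ∃ v ≠ 0, A *ᵥ v = μ • v := by
  rw [← spectrum_toLin', ← Module.End.hasEigenvalue_iff_mem_spectrum] at h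
  obtain ⟨v, hv⟩ := h.exists_hasEigenvector
  exact ⟨v, hv.2, hv.apply_eq_smul⟩

theorem two_smul_one_add_diagonal [DecidableEq n] {K : Type*} [Field K] (d : n → K) :
    2 • (1 : Matrix n n K) + diagonal d = diagonal fun i => 2 + d i := by
  rw [← diagonal_one, ← diagonal_smul, diagonal_add]
  congr 1
  funext i
  simp

theorem inv_diagonal_of_ne_zero [Fintype n] [DecidableEq n] {K : Type*} [Field K] {d : n → K}
    (hd : ∀ i, d i ≠ 0) : (diagonal d)⁻¹ = diagonal fun i => (d i)⁻¹ := by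
  refine inv_eq_left_inv ?_
  rw [diagonal_mul_diagonal, ← diagonal_one]
  exact congrArg diagonal (funext fun i => inv_mul_cancel₀ (hd i))

structure IsWeaklyChainedSubstochastic [Fintype n] (D : Matrix n n ℝ) : Prop where
  nonneg : ∀ i j, 0 ≤ D i j
  sum_row_le_one : ∀ i, ∑ j, D i j ≤ 1
  exists_reaches_deficient_row :
    ∀ i, ∃ r, ∑ j, D r j < 1 ∧ ReflTransGen (fun x y => 0 < D x y) i r

section Substochastic

variable [Fintype n] {D : Matrix n n ℝ} {v : n → ℂ} {μ : ℂ}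

theorem norm_mul_norm_le_sum_mul_norm (hnn : ∀ i j, 0 ≤ D i j)
    (hv : D.map Complex.ofReal *ᵥ v = μ • v) (j : n) :
    ‖μ‖ * ‖v j‖ ≤ ∑ k, D j k * ‖v k‖ :=
  calc ‖μ‖ * ‖v j‖ = ‖∑ k, (D j k : ℂ) * v k‖ := by
        rw [← norm_mul, ← smul_eq_mul, ← Pi.smul_apply, ← hv]; rfl
    _ ≤ ∑ k, ‖(D j k : ℂ) * v k‖ := norm_sum_le _ _
    _ = ∑ k, D j k * ‖v k‖ := by
        simp only [norm_mul, Complex.norm_real, Real.norm_of_nonneg (hnn _ _)]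

theorem sum_row_eq_one_and_norm_eq_of_isMax (hnn : ∀ i j, 0 ≤ D i j)
    (hrow : ∀ i, ∑ j, D i j ≤ 1) (hv : D.map Complex.ofReal *ᵥ v = μ • v) (hμ : 1 ≤ ‖μ‖)
    {j : n} (hmax : ∀ k, ‖v k‖ ≤ ‖v j‖) (hpos : 0 < ‖v j‖) :
    ∑ k, D j k = 1 ∧ ∀ k, 0 < D j k → ‖v k‖ = ‖v j‖ := by
  set M := ‖v j‖
  have hle : ∀ k ∈ Finset.univ, D j k * ‖v k‖ ≤ D j k * M := fun k _ =>
    mul_le_mul_of_nonneg_left (hmax k) (hnn j k)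
  have hlower : M ≤ ∑ k, D j k * ‖v k‖ :=
    (le_mul_of_one_le_left hpos.le hμ).trans (norm_mul_norm_le_sum_mul_norm hnn hv j)
  have hupper : ∑ k, D j k * M ≤ M := by
    rw [← Finset.sum_mul]
    exact mul_le_of_le_one_left hpos.le (hrow j)
  refine ⟨?_, fun k hk => ?_⟩
  · have : (∑ k, D j k) * M = 1 * M := by
      rw [Finset.sum_mul, one_mul]
      exact le_antisymm hupper (hlower.trans (Finset.sum_le_sum hle))
    exact mul_right_cancel₀ hpos.ne' this
  · have hsum : ∑ k, D j k * ‖v k‖ = ∑ k, D j k * M :=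
      le_antisymm (Finset.sum_le_sum hle) (hupper.trans hlower)
    exact mul_left_cancel₀ hk.ne' ((Finset.sum_eq_sum_iff_of_le hle).1 hsum k (Finset.mem_univ k))

theorem IsWeaklyChainedSubstochastic.norm_lt_one [DecidableEq n]
    (hD : D.IsWeaklyChainedSubstochastic) (hμ : μ ∈ spectrum ℂ (D.map Complex.ofReal)) :
    ‖μ‖ < 1 := by
  by_contra! h
  obtain ⟨v, hv0, hv⟩ := exists_mulVec_eq_smul_of_mem_spectrum hμ
  obtain ⟨i, hi⟩ := Function.ne_iff.1 hv0
  have : Nonempty n := ⟨i⟩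
  obtain ⟨i₀, hi₀⟩ := Finite.exists_max fun k => ‖v k‖
  have hpos : 0 < ‖v i₀‖ := (norm_pos_iff.2 hi).trans_le (hi₀ i)
  have key := fun {j} (hj : ‖v j‖ = ‖v i₀‖) =>
    sum_row_eq_one_and_norm_eq_of_isMax hD.nonneg hD.sum_row_le_one hv h (j := j)
      (fun k => hj ▸ hi₀ k) (hj ▸ hpos)
  have hclosed : ∀ k, ReflTransGen (fun x y => 0 < D x y) i₀ k → ‖v k‖ = ‖v i₀‖ := by
    intro k hk
    induction hk with
    | refl => rfl
    | tail _ hbc ih => exact ((key ih).2 _ hbc).trans ih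
  obtain ⟨r, hr, hpath⟩ := hD.exists_reaches_deficient_row i₀
  exact hr.ne (key (hclosed r hpath)).1

end Substochastic

section Laplacian

variable [Fintype n] [DecidableEq n] {a : n → n → ℝ} {L : Matrix n n ℝ} {c ι : n → ℝ}

theorem sum_row_eq_of_laplacian (hL : ∀ i j, L i j = if i = j then ∑ k, a i k else -a i j)
    (i : n) : ∑ j, L i j = a i i := by
  have : ∀ j, L i j = (if i = j then ∑ k, a i k + a i j else 0) - a i j := by
    intro j; rw [hL]; split_ifs <;> ring
  simp only [this, Finset.sum_sub_distrib, Finset.sum_ite_eq, Finset.mem_univ, if_true]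
  ring

variable (hL : ∀ i j, L i j = if i = j then ∑ k, a i k else -a i j)
include hL

theorem one_sub_diagonal_mul_apply_of_ne {i j : n} (hij : i ≠ j) :
    (1 - diagonal c * (L + diagonal ι)) i j = c i * a i j := by
  simp [diagonal_mul, hL, hij]

theorem one_sub_diagonal_mul_apply_self (i : n) :
    (1 - diagonal c * (L + diagonal ι)) i i = 1 - c i * (∑ k, a i k + ι i) := by
  simp [diagonal_mul, hL]

theorem sum_row_one_sub_diagonal_mul (i : n) :
    ∑ j, (1 - diagonal c * (L + diagonal ι)) i j = 1 - c i * (a i i + ι i) := by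
  simp [diagonal_mul, ← Finset.mul_sum, Finset.sum_add_distrib, sum_row_eq_of_laplacian hL,
    one_apply, diagonal_apply]

theorem sum_row_one_sub_diagonal_mul_le_one (ha : ∀ i j, 0 ≤ a i j) (hc : ∀ i, 0 ≤ c i)
    (hι : ∀ i, 0 ≤ ι i) (i : n) : ∑ j, (1 - diagonal c * (L + diagonal ι)) i j ≤ 1 := by
  rw [sum_row_one_sub_diagonal_mul hL]
  exact sub_le_self _ (mul_nonneg (hc i) (add_nonneg (ha i i) (hι i)))

theorem sum_row_one_sub_diagonal_mul_lt_one {i : n} (ha : 0 ≤ a i i) (hc : 0 < c i)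
    (hι : 0 < ι i) : ∑ j, (1 - diagonal c * (L + diagonal ι)) i j < 1 := by
  rw [sum_row_one_sub_diagonal_mul hL]
  exact sub_lt_self _ (mul_pos hc (add_pos_of_nonneg_of_pos ha hι))

theorem one_sub_diagonal_mul_nonneg (ha : ∀ i j, 0 ≤ a i j) (hc : ∀ i, 0 ≤ c i)
    (hdiag : ∀ i, c i * (∑ k, a i k + ι i) ≤ 1) (i j : n) :
    0 ≤ (1 - diagonal c * (L + diagonal ι)) i j := by
  rcases eq_or_ne i j with rfl | hij
  · rw [one_sub_diagonal_mul_apply_self hL]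
    linarith [hdiag i]
  · rw [one_sub_diagonal_mul_apply_of_ne hL hij]
    exact mul_nonneg (hc i) (ha i j)

end Laplacian

end Matrix

theorem stmt_13_general {N : ℕ}
    (a : Fin N → Fin N → ℝ)
    (ha : ∀ i j, 0 ≤ a i j)
    (L : Matrix (Fin N) (Fin N) ℝ)
    (hL : ∀ i j, L i j = if i = j then ∑ k, a i k else -(a i j))
    (ι : Fin N → ℝ) (hι : ∀ i, ι i = 0 ∨ ι i = 1)
    -- every node is reachable from some root node (with ι = 1)
    (hroot : ∀ i : Fin N, ∃ r : Fin N, ι r = 1 ∧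
      Relation.ReflTransGen (fun x y : Fin N => 0 < a y x) r i)
    (dbar : Fin N → ℝ) (hdbar : ∀ i, (∑ j, a i j) ≤ dbar i)
    (Lt : Matrix (Fin N) (Fin N) ℝ) (hLt : Lt = L + Matrix.diagonal ι)
    (Dt : Matrix (Fin N) (Fin N) ℝ)
    (hDt : Dt = 1 - (2 • (1 : Matrix (Fin N) (Fin N) ℝ) + Matrix.diagonal dbar)⁻¹ * Lt) :
    (∀ i j, 0 ≤ Dt i j) ∧
    (∀ i, ∑ j, Dt i j ≤ 1) ∧
    (∀ i, ι i = 1 → ∑ j, Dt i j < 1) ∧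
    (∀ mu ∈ spectrum ℂ (Dt.map Complex.ofReal), ‖mu‖ < 1) := by
  have hpos : ∀ i, 0 < 2 + dbar i := fun i => by
    linarith [hdbar i, Finset.sum_nonneg fun j (_ : j ∈ Finset.univ) => ha i j]
  have hι0 : ∀ i, 0 ≤ ι i := fun i => by rcases hι i with h | h <;> simp [h]
  rw [two_smul_one_add_diagonal, inv_diagonal_of_ne_zero fun i => (hpos i).ne', hLt] at hDt
  set c : Fin N → ℝ := fun i => (2 + dbar i)⁻¹
  have hc : ∀ i, 0 < c i := fun i => inv_pos.2 (hpos i)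
  have hrow_lt : ∀ i, ι i = 1 → ∑ j, (1 - diagonal c * (L + diagonal ι)) i j < 1 := fun i hi =>
    sum_row_one_sub_diagonal_mul_lt_one hL (ha i i) (hc i) (hi ▸ one_pos)
  have hD : (1 - diagonal c * (L + diagonal ι)).IsWeaklyChainedSubstochastic := by
    refine ⟨one_sub_diagonal_mul_nonneg hL ha (fun i => (hc i).le) fun i => ?_,
      sum_row_one_sub_diagonal_mul_le_one hL ha (fun i => (hc i).le) hι0, fun i => ?_⟩
    · rw [inv_mul_le_iff₀ (hpos i), mul_one]
      rcases hι i with h | h <;> linarith [hdbar i, h]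
    · obtain ⟨r, hr, hpath⟩ := hroot i
      refine ⟨r, hrow_lt r hr, (reflTransGen_swap.2 hpath).mono_of_ne fun x y hxy hxy' => ?_⟩
      rw [one_sub_diagonal_mul_apply_of_ne hL hxy]
      exact mul_pos (hc x) hxy'
  subst hDt
  exact ⟨hD.nonneg, hD.sum_row_le_one, hrow_lt, fun μ hμ => hD.norm_lt_one hμ⟩

theorem stmt_13 {N : ℕ}
    (a : Fin N → Fin N → ℝ)
    (ha : ∀ i j, 0 ≤ a i j) (hdiag : ∀ i, a i i = 0)
    (L : Matrix (Fin N) (Fin N) ℝ)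
    (hL : ∀ i j, L i j = if i = j then ∑ k, a i k else -(a i j))
    (ι : Fin N → ℝ) (hι : ∀ i, ι i = 0 ∨ ι i = 1)
    -- every node is reachable from some root node (with ι = 1)
    (hroot : ∀ i : Fin N, ∃ r : Fin N, ι r = 1 ∧
      Relation.ReflTransGen (fun x y : Fin N => 0 < a y x) r i)
    (dbar : Fin N → ℝ) (hdbar : ∀ i, (∑ j, a i j) ≤ dbar i)
    (Lt : Matrix (Fin N) (Fin N) ℝ) (hLt : Lt = L + Matrix.diagonal ι)
    (Dt : Matrix (Fin N) (Fin N) ℝ)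
    (hDt : Dt = 1 - (2 • (1 : Matrix (Fin N) (Fin N) ℝ) + Matrix.diagonal dbar)⁻¹ * Lt) :
    (∀ i j, 0 ≤ Dt i j) ∧
    (∀ i, ∑ j, Dt i j ≤ 1) ∧
    (∀ i, ι i = 1 → ∑ j, Dt i j < 1) ∧
    (∀ mu ∈ spectrum ℂ (Dt.map Complex.ofReal), ‖mu‖ < 1) :=
  stmt_13_general a ha L hL ι hι hroot dbar hdbar Lt hLt Dt hDt
end
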